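/- Classification theorem, ellipse case (part 2): Let W = (x_W, y_W) ∈ ℝ² satisfy dist(W, A) < |y_W| (W is strictly inside the parabola with focus A and directrix BC) and h(W) ≠ 0 (W is not on the line ZV). Let Q_W(x,y) = h(W)² · f₁(x,y) f₂(x,y) − f₁(W) f₂(W) · h(x,y)², the member of the pencil 𝔽 passing through W. Then the discriminant of Q_W is strictly negative; i.e. the pencil member through W is an ellipse. -/
import Mathlib


/-- Affine linear form vanishing exactly on the perpendicular bisector of `AB`
(`B = (0,0)`, `A = (x_A, y_A)`, `c = |AB|`). -/
noncomputable def f1 (xA yA c x y : ℝ) : ℝ := 2*xA*x + 2*yA*y - c^2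

/-- Affine linear form vanishing exactly on the perpendicular bisector of `AC`
(`C = (1,0)`). -/
noncomputable def f2 (xA yA c x y : ℝ) : ℝ := 2*(1 - xA)*x - 2*yA*y + c^2 - 1

/-- Affine linear form vanishing exactly on the line `ZV`. -/
noncomputable def hZV (yA b c x y : ℝ) : ℝ := (b^2 - c^2)*x - 2*yA*y + c^2

/-- Classification theorem, ellipse case: if `W` is strictly inside the parabola with
focus `A` and directrix `BC` and not on the line `ZV`, then the member
`Q_W = h(W)² f₁ f₂ − f₁(W) f₂(W) h²` of the pencil `𝔽` through `W` has strictly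
negative discriminant, i.e. is an ellipse. -/
theorem statement7 (xA yA : ℝ) (hyA : yA ≠ 0)
    (b c : ℝ) (hb : b = Real.sqrt ((xA - 1)^2 + yA^2))
    (hc : c = Real.sqrt (xA^2 + yA^2)) (hbc : b ≠ c)
    (xW yW : ℝ)
    (hWin : Real.sqrt ((xW - xA)^2 + (yW - yA)^2) < |yW|)
    (hWZV : hZV yA b c xW yW ≠ 0)
    (Q : ℝ → ℝ → ℝ)
    (hQ : ∀ x y : ℝ, Q x y = (hZV yA b c xW yW)^2 * (f1 xA yA c x y * f2 xA yA c x y)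
        - (f1 xA yA c xW yW * f2 xA yA c xW yW) * (hZV yA b c x y)^2)
    (A2 B2 C2 D2 E2 F2 : ℝ)
    (hcoef : ∀ x y : ℝ, Q x y = A2*x^2 + B2*(x*y) + C2*y^2 + D2*x + E2*y + F2) :
    B2^2 - 4*A2*C2 < 0 := by
  have hb2 : b^2 = (xA-1)^2 + yA^2 := by rw [hb]; exact Real.sq_sqrt (by positivity)
  have hc2 : c^2 = xA^2 + yA^2 := by rw [hc]; exact Real.sq_sqrt (by positivity)
  have hd : (xW - xA)^2 + (yW - yA)^2 < yW^2 := by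
    have h0 := Real.sqrt_nonneg ((xW - xA)^2 + (yW - yA)^2)
    have h1 := Real.sq_sqrt (show (0:ℝ) ≤ (xW - xA)^2 + (yW - yA)^2 by positivity)
    nlinarith [sq_abs yW, hWin]
  have e : ∀ x y : ℝ,
      (hZV yA b c xW yW)^2 * (f1 xA yA c x y * f2 xA yA c x y)
        - (f1 xA yA c xW yW * f2 xA yA c xW yW) * (hZV yA b c x y)^2
      = A2*x^2 + B2*(x*y) + C2*y^2 + D2*x + E2*y + F2 :=
    fun x y => (hQ x y).symm.trans (hcoef x y)
  simp only [f1, f2, hZV, hb2, hc2] at e hWZV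
  set K : ℝ := ((1-2*xA)*xW - 2*yA*yW + (xA^2+yA^2))^2 with hKdef
  set L : ℝ := (2*xA*xW + 2*yA*yW - (xA^2+yA^2)) *
      (2*(1-xA)*xW - 2*yA*yW + (xA^2+yA^2) - 1) with hLdef
  have hA2 : A2 = 4*xA*(1-xA)*K - (1-2*xA)^2*L := by
    rw [hKdef, hLdef]; linear_combination e 0 0 - (e 1 0 + e (-1) 0)/2
  have hC2 : C2 = -4*yA^2*(K+L) := by
    rw [hKdef, hLdef]; linear_combination e 0 0 - (e 0 1 + e 0 (-1))/2
  have hB2 : B2 = 4*yA*(1-2*xA)*K + 4*yA*(1-2*xA)*L := by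
    rw [hKdef, hLdef]; linear_combination -(e 1 1) + e 1 0 + e 0 1 - e 0 0
  have hKpos : 0 < K := by
    rw [hKdef]
    have hne : (1-2*xA)*xW - 2*yA*yW + (xA^2+yA^2) ≠ 0 := by
      intro h; apply hWZV; linear_combination h
    exact lt_of_le_of_ne (sq_nonneg _) (Ne.symm (pow_ne_zero 2 hne))
  have hKL : K + L = (xW-xA)^2 + (yW-yA)^2 - yW^2 := by rw [hKdef, hLdef]; ring
  have key : B2^2 - 4*A2*C2 = 16*yA^2*K*(K+L) := by
    rw [hA2, hB2, hC2]; ring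
  have hyA2 : 0 < yA^2 := by positivity
  have hKLneg : K + L < 0 := by rw [hKL]; linarith
  nlinarith [mul_pos (mul_pos hyA2 hKpos) (neg_pos.mpr hKLneg)]
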